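/- arXiv:2512.03930 — 2 statements merged into one kernel-verified Lean document; each statement's English description precedes it below -/
import Mathlib

section
/- Let Γ be a d-closed class of normal-form games and φ a solution concept on Γ satisfying Merging Consistency and Joint Optimality. Then for every game G in Γ, every Nash equilibrium of G belongs to φ(G). -/
universe u v

variable {ι : Type u} {σ : ι → Type v}

/-- A normal-form game: nonempty strategy sets and complete, transitive
preferences over strategy profiles. -/
structure Game (ι : Type u) (σ : ι → Type v) where
  S : ∀ i, Set (σ i)
  nonempty : ∀ i, (S i).Nonempty
  pref : ι → (∀ i, σ i) → (∀ i, σ i) → Prop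
  complete : ∀ i s t, (∀ j, s j ∈ S j) → (∀ j, t j ∈ S j) → pref i s t ∨ pref i t s
  trans : ∀ i s t u, (∀ j, s j ∈ S j) → (∀ j, t j ∈ S j) → (∀ j, u j ∈ S j) →
    pref i s t → pref i t u → pref i s u

/-- The set of feasible strategy profiles of a game. -/
def Game.profiles (G : Game ι σ) : Set (∀ i, σ i) := {s | ∀ i, s i ∈ G.S i}

/-- The strict part of player `i`'s preference. -/
def Game.StrictPref (G : Game ι σ) (i : ι) (s t : ∀ j, σ j) : Prop :=
  G.pref i s t ∧ ¬ G.pref i t s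

/-- Nash equilibrium: a feasible profile from which no player can unilaterally
deviate to a strictly preferred profile. -/
def Game.IsNash [DecidableEq ι] (G : Game ι σ) (s : ∀ i, σ i) : Prop :=
  s ∈ G.profiles ∧ ∀ i, ∀ t ∈ G.S i, G.pref i s (Function.update s i t)

/-- `G'` is a reduction of `G`: same players, nonempty subsets of strategy
sets, preferences restricted to the smaller profile set. -/
def IsReduction (G' G : Game ι σ) : Prop :=
  (∀ i, G'.S i ⊆ G.S i) ∧
  ∀ i s t, G'.pref i s t ↔ (G.pref i s t ∧ s ∈ G'.profiles ∧ t ∈ G'.profiles)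

/-- `G'` is a strict reduction of `G`: a reduction obtained by removing at
least one strategy, every removed strategy being strictly dominated by some
remaining strategy of the same player. -/
def IsStrictReduction [DecidableEq ι] (G' G : Game ι σ) : Prop :=
  IsReduction G' G ∧ (∃ j, (G.S j \ G'.S j).Nonempty) ∧
  ∀ i, ∀ si ∈ G.S i \ G'.S i, ∃ si' ∈ G'.S i,
    ∀ s ∈ G.profiles, G.StrictPref i (Function.update s i si') (Function.update s i si)

/-- `s` is a profile of strategies each of which maximizes its player's
preference uniformly over all opponents' profiles (weak dominance). -/
def JointlyOptimal [DecidableEq ι] (G : Game ι σ) (s : ∀ i, σ i) : Prop :=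
  s ∈ G.profiles ∧ ∀ i, ∀ t ∈ G.profiles, ∀ u ∈ G.S i,
    G.pref i (Function.update t i (s i)) (Function.update t i u)

/-- The reduction `G'` of `G` has a dummy player. -/
def HasDummy (G' G : Game ι σ) : Prop :=
  ∃ j, (∃ x, G'.S j = {x}) ∧ ∀ i, i ≠ j → G'.S i = G.S i ∨ ∃ x, G'.S i = {x}

/-- The reduction `G'` of `G` has a quasi-dummy player. -/
def HasQuasiDummy (G' G : Game ι σ) : Prop :=
  ∃ j, (∃ x y : σ j, x ≠ y ∧ G'.S j = {x, y}) ∧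
    ∀ i, i ≠ j → G'.S i = G.S i ∨ ∃ x y : σ i, G'.S i ⊆ {x, y}

/-- A class of games is d-closed if it contains every reduction with a dummy
or quasi-dummy player of each of its games. -/
def DClosed (Γ : Set (Game ι σ)) : Prop :=
  ∀ G ∈ Γ, ∀ G', IsReduction G' G → (HasDummy G' G ∨ HasQuasiDummy G' G) → G' ∈ Γ

/-- Independence of irrelevant strategies. -/
def SatIIS (Γ : Set (Game ι σ)) (φ : Game ι σ → Set (∀ i, σ i)) : Prop :=
  ∀ G ∈ Γ, ∀ G' ∈ Γ, IsReduction G' G → G'.profiles ∩ φ G ⊆ φ G'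

/-- Merging consistency. -/
def SatMC (Γ : Set (Game ι σ)) (φ : Game ι σ → Set (∀ i, σ i)) : Prop :=
  ∀ G ∈ Γ, ∀ G' ∈ Γ, ∀ G'' ∈ Γ, IsReduction G' G → IsReduction G'' G →
    (∀ i, G'.S i ∪ G''.S i = G.S i) → φ G' ∩ φ G'' ⊆ φ G

/-- Invariance to strictly dominated strategies. -/
def SatISDS [DecidableEq ι] (Γ : Set (Game ι σ)) (φ : Game ι σ → Set (∀ i, σ i)) : Prop :=
  ∀ G ∈ Γ, ∀ G' ∈ Γ, IsStrictReduction G' G → φ G = φ G'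

/-- Joint optimality. -/
def SatJO [DecidableEq ι] (Γ : Set (Game ι σ)) (φ : Game ι σ → Set (∀ i, σ i)) : Prop :=
  ∀ G ∈ Γ, ∀ s, JointlyOptimal G s → s ∈ φ G

/-!
Let `s` be a Nash equilibrium of `G`, and let `G_T` (`G.fixOutside hs T`) be the reduction
in which the players outside `T` are fixed at `s`. While `T ≠ univ`, `G_T` has a dummy player, so it lies in `Γ`.
When at most one player is free, a Nash equilibrium is jointly optimal, so `s ∈ φ G_∅` and
`s ∈ φ G_{i}` by JO. Since `G_{insert i T}` is the merge of `G_T` and `G_{i}`, MC gives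
`s ∈ φ G_T` for every `T ≠ univ` by induction, and a last merge of `G_{univ \ {j}}` with
`G_{j}` gives `s ∈ φ G`.
-/

namespace Game

lemma pref_refl (G : Game ι σ) (i : ι) {s : ∀ j, σ j} (hs : s ∈ G.profiles) :
    G.pref i s s :=
  (G.complete i s s hs hs).elim id id

lemma update_mem_profiles [DecidableEq ι] {G : Game ι σ} {t : ∀ j, σ j} (ht : t ∈ G.profiles)
    {i : ι} {x : σ i} (hx : x ∈ G.S i) : Function.update t i x ∈ G.profiles := by
  intro j
  rcases eq_or_ne j i with rfl | hj
  · simpa using hx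
  · simpa [hj] using ht j

def restrict (G : Game ι σ) (T : ∀ i, Set (σ i)) (hT : ∀ i, T i ⊆ G.S i)
    (hne : ∀ i, (T i).Nonempty) : Game ι σ where
  S := T
  nonempty := hne
  pref i a b := G.pref i a b ∧ (∀ j, a j ∈ T j) ∧ (∀ j, b j ∈ T j)
  complete i a b ha hb :=
    (G.complete i a b (fun j => hT j (ha j)) (fun j => hT j (hb j))).imp
      (fun h => ⟨h, ha, hb⟩) (fun h => ⟨h, hb, ha⟩)
  trans i a b c ha hb hc hab hbc :=
    ⟨G.trans i a b c (fun j => hT j (ha j)) (fun j => hT j (hb j)) (fun j => hT j (hc j))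
      hab.1 hbc.1, ha, hc⟩

lemma isReduction_restrict (G : Game ι σ) (T : ∀ i, Set (σ i)) (hT : ∀ i, T i ⊆ G.S i)
    (hne : ∀ i, (T i).Nonempty) : IsReduction (G.restrict T hT hne) G :=
  ⟨hT, fun _ _ _ => Iff.rfl⟩

lemma IsNash.of_isReduction [DecidableEq ι] {G G' : Game ι σ} {s : ∀ i, σ i}
    (hN : G.IsNash s) (hG' : IsReduction G' G) (hs : s ∈ G'.profiles) : G'.IsNash s :=
  ⟨hs, fun i _ ht => (hG'.2 i _ _).2 ⟨hN.2 i _ (hG'.1 i ht), hs, update_mem_profiles hs ht⟩⟩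

lemma IsNash.jointlyOptimal [DecidableEq ι] {G : Game ι σ} {s : ∀ i, σ i} (hN : G.IsNash s)
    (hfree : {i | ¬ G.S i ⊆ {s i}}.Subsingleton) : JointlyOptimal G s := by
  refine ⟨hN.1, fun i t ht u hu => ?_⟩
  by_cases hi : G.S i ⊆ {s i}
  · obtain rfl : u = s i := hi hu
    exact G.pref_refl i (update_mem_profiles ht hu)
  · have hothers : ∀ j ≠ i, t j = s j := fun j hj =>
      by_contra fun hjfree => hj (hfree (fun hsub => hjfree (hsub (ht j))) hi)
    have hupdate : ∀ x, Function.update t i x = Function.update s i x := fun x => by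
      funext j
      rcases eq_or_ne j i with rfl | hj
      · simp
      · simp [hj, hothers j hj]
    rw [hupdate, hupdate, Function.update_eq_self]
    exact hN.2 i u hu

end Game

namespace IsReduction

lemma of_subset {G G' G'' : Game ι σ} (h' : IsReduction G' G) (h'' : IsReduction G'' G)
    (hS : ∀ i, G'.S i ⊆ G''.S i) : IsReduction G' G'' := by
  have hprof : ∀ a ∈ G'.profiles, a ∈ G''.profiles := fun a ha j => hS j (ha j)
  refine ⟨hS, fun i a b => ?_⟩
  rw [h'.2, h''.2]
  constructor
  · rintro ⟨h, ha, hb⟩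
    exact ⟨⟨h, hprof a ha, hprof b hb⟩, ha, hb⟩
  · rintro ⟨⟨h, -, -⟩, ha, hb⟩
    exact ⟨h, ha, hb⟩

end IsReduction

namespace Game

variable [DecidableEq ι] (G : Game ι σ) {s : ∀ i, σ i} (hs : s ∈ G.profiles)

def fixOutside (T : Finset ι) : Game ι σ :=
  G.restrict (fun i => if i ∈ T then G.S i else {s i})
    (fun i => by split_ifs <;> simp [hs i])
    (fun i => by split_ifs <;> simp [G.nonempty i])

variable {G}

lemma fixOutside_S (T : Finset ι) (i : ι) :
    (G.fixOutside hs T).S i = if i ∈ T then G.S i else {s i} := rfl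

lemma mem_profiles_fixOutside (T : Finset ι) : s ∈ (G.fixOutside hs T).profiles := by
  intro i
  rw [fixOutside_S]
  split_ifs
  exacts [hs i, rfl]

lemma isReduction_fixOutside (T : Finset ι) : IsReduction (G.fixOutside hs T) G :=
  isReduction_restrict ..

lemma isReduction_fixOutside_of_subset {T T' : Finset ι} (hTT' : T ⊆ T') :
    IsReduction (G.fixOutside hs T) (G.fixOutside hs T') := by
  refine (isReduction_fixOutside hs T).of_subset (isReduction_fixOutside hs T') fun i => ?_
  simp only [fixOutside_S]
  split_ifs with hT hT' hT'
  · exact subset_rfl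
  · exact absurd (hTT' hT) hT'
  · exact Set.singleton_subset_iff.2 (hs i)
  · exact subset_rfl

lemma fixOutside_S_union (T T' : Finset ι) (i : ι) :
    (G.fixOutside hs T).S i ∪ (G.fixOutside hs T').S i = (G.fixOutside hs (T ∪ T')).S i := by
  have hsi : {s i} ⊆ G.S i := Set.singleton_subset_iff.2 (hs i)
  simp only [fixOutside_S, Finset.mem_union]
  split_ifs <;> simp_all

lemma hasDummy_fixOutside [Fintype ι] {T : Finset ι} (hT : T ≠ Finset.univ) :
    HasDummy (G.fixOutside hs T) G := by
  obtain ⟨j, hj⟩ : ∃ j, j ∉ T := by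
    by_contra! h
    exact hT (Finset.eq_univ_of_forall h)
  refine ⟨j, ⟨s j, by simp [fixOutside_S, hj]⟩, fun i _ => ?_⟩
  by_cases hi : i ∈ T
  · exact Or.inl (by simp [fixOutside_S, hi])
  · exact Or.inr ⟨s i, by simp [fixOutside_S, hi]⟩

lemma IsNash.jointlyOptimal_fixOutside (hN : G.IsNash s) {T : Finset ι}
    (hT : (T : Set ι).Subsingleton) : JointlyOptimal (G.fixOutside hs T) s := by
  refine (hN.of_isReduction (isReduction_fixOutside hs T)
    (mem_profiles_fixOutside hs T)).jointlyOptimal (hT.anti fun i hi => Finset.mem_coe.2 ?_)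
  by_contra hiT
  exact hi (by rw [fixOutside_S, if_neg hiT])

end Game

section Solution

variable [DecidableEq ι] [Fintype ι] {Γ : Set (Game ι σ)} {φ : Game ι σ → Set (∀ i, σ i)}
  {G : Game ι σ} {s : ∀ i, σ i}

lemma Game.fixOutside_mem (hd : DClosed Γ) (hG : G ∈ Γ) (hs : s ∈ G.profiles) {T : Finset ι}
    (hT : T ≠ Finset.univ) : G.fixOutside hs T ∈ Γ :=
  hd G hG _ (isReduction_fixOutside hs T) (Or.inl (hasDummy_fixOutside hs hT))

lemma Game.IsNash.mem_sol_fixOutside (hd : DClosed Γ) (hMC : SatMC Γ φ) (hJO : SatJO Γ φ)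
    (hG : G ∈ Γ) (hN : G.IsNash s) {T : Finset ι} (hT : T ≠ Finset.univ) :
    s ∈ φ (G.fixOutside hN.1 T) := by
  have hne : ∀ {A B : Finset ι}, A ⊆ B → B ≠ Finset.univ → A ≠ Finset.univ :=
    fun hAB hB hA => hB (Finset.univ_subset_iff.1 (hA ▸ hAB))
  induction T using Finset.induction_on with
  | empty =>
    exact hJO _ (fixOutside_mem hd hG hN.1 hT) s (hN.jointlyOptimal_fixOutside hN.1 (by simp))
  | insert i T _ ih =>
    have hi : ({i} : Finset ι) ≠ Finset.univ := hne (by simp) hT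
    have hT' : T ≠ Finset.univ := hne (Finset.subset_insert i T) hT
    rw [Finset.insert_eq] at hT ⊢
    refine hMC _ (fixOutside_mem hd hG hN.1 hT) _ (fixOutside_mem hd hG hN.1 hi)
      _ (fixOutside_mem hd hG hN.1 hT') (isReduction_fixOutside_of_subset hN.1 (by simp))
      (isReduction_fixOutside_of_subset hN.1 (by simp)) (fixOutside_S_union hN.1 _ _)
      ⟨hJO _ (fixOutside_mem hd hG hN.1 hi) s (hN.jointlyOptimal_fixOutside hN.1 (by simp)),
        ih hT'⟩

end Solution

open Game in
theorem nash_subset_sol_general [DecidableEq ι] [Fintype ι]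
    (Γ : Set (Game ι σ)) (φ : Game ι σ → Set (∀ i, σ i))
    (hd : DClosed Γ) (hMC : SatMC Γ φ) (hJO : SatJO Γ φ) :
    ∀ G ∈ Γ, ∀ s, G.IsNash s → s ∈ φ G := by
  intro G hG s hN
  rcases subsingleton_or_nontrivial ι with hι | hι
  · exact hJO G hG s (hN.jointlyOptimal Set.subsingleton_of_subsingleton)
  obtain ⟨j, k, hjk⟩ := exists_pair_ne ι
  have hj : ({j} : Finset ι) ≠ Finset.univ := fun h =>
    hjk (Finset.mem_singleton.1 (h ▸ Finset.mem_univ k)).symm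
  have hj' : Finset.univ.erase j ≠ Finset.univ := (Finset.erase_ssubset (Finset.mem_univ j)).ne
  refine hMC G hG _ (fixOutside_mem hd hG hN.1 hj) _ (fixOutside_mem hd hG hN.1 hj')
    (isReduction_fixOutside hN.1 _) (isReduction_fixOutside hN.1 _) (fun i => ?_)
    ⟨hN.mem_sol_fixOutside hd hMC hJO hG hj, hN.mem_sol_fixOutside hd hMC hJO hG hj'⟩
  rw [fixOutside_S_union, fixOutside_S, if_pos (by simp)]

/-- Lemma 1(b): on a d-closed class, any solution concept
satisfying MC and JO selects all Nash equilibria. -/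
theorem nash_subset_sol [DecidableEq ι] [Fintype ι] [Nonempty ι]
    (Γ : Set (Game ι σ)) (φ : Game ι σ → Set (∀ i, σ i))
    (hsol : ∀ G ∈ Γ, φ G ⊆ G.profiles) (hd : DClosed Γ)
    (hMC : SatMC Γ φ) (hJO : SatJO Γ φ) :
    ∀ G ∈ Γ, ∀ s, G.IsNash s → s ∈ φ G :=
  nash_subset_sol_general Γ φ hd hMC hJO
end

section
/- Let Γ be a strictly closed class of one-player games. A solution concept φ on Γ satisfies ISDS and JO if and only if φ(G) equals the set of preference-maximal strategies of G for every G in Γ. -/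
universe u v

variable {ι : Type u} {σ : ι → Type v}

variable {α : Type u}

/-- A one-player game: a nonempty strategy set with a complete and transitive
preference relation on it. -/
structure OneGame (α : Type u) where
  S : Set α
  nonempty : S.Nonempty
  pref : α → α → Prop
  complete : ∀ s ∈ S, ∀ t ∈ S, pref s t ∨ pref t s
  trans : ∀ s ∈ S, ∀ t ∈ S, ∀ u ∈ S, pref s t → pref t u → pref s u

/-- `G'` is a strict reduction of the one-player game `G`: at least one
strategy is removed, each removed strategy being strictly dominated by some
remaining one; preferences are restricted. -/
def OneGame.IsStrictReduction (G' G : OneGame α) : Prop :=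
  G'.S ⊆ G.S ∧ (G.S \ G'.S).Nonempty ∧
  (∀ s t, G'.pref s t ↔ (G.pref s t ∧ s ∈ G'.S ∧ t ∈ G'.S)) ∧
  ∀ s ∈ G.S \ G'.S, ∃ s' ∈ G'.S, G.pref s' s ∧ ¬ G.pref s s'

/-- The preference-maximal strategies (Nash equilibria) of a one-player game. -/
def OneGame.maxSet (G : OneGame α) : Set α := {s ∈ G.S | ∀ t ∈ G.S, G.pref s t}

/-- A strictly closed class of one-player games. -/
def StrictlyClosed1 (Γ : Set (OneGame α)) : Prop :=
  ∀ G ∈ Γ, ∀ G', G'.IsStrictReduction G → G' ∈ Γ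

/-- ISDS for one-player games. -/
def SatISDS1 (Γ : Set (OneGame α)) (φ : OneGame α → Set α) : Prop :=
  ∀ G ∈ Γ, ∀ G' ∈ Γ, G'.IsStrictReduction G → φ G = φ G'

/-- JO for one-player games. -/
def SatJO1 (Γ : Set (OneGame α)) (φ : OneGame α → Set α) : Prop :=
  ∀ G ∈ Γ, ∀ s ∈ G.maxSet, s ∈ φ G

namespace OneGame

def restrict (G : OneGame α) (T : Set α) (hT : (G.S ∩ T).Nonempty) : OneGame α where
  S := G.S ∩ T
  nonempty := hT
  pref a b := G.pref a b ∧ a ∈ G.S ∩ T ∧ b ∈ G.S ∩ T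
  complete a ha b hb := (G.complete a ha.1 b hb.1).imp (⟨·, ha, hb⟩) (⟨·, hb, ha⟩)
  trans a ha b hb c hc hab hbc := ⟨G.trans a ha.1 b hb.1 c hc.1 hab.1 hbc.1, ha, hc⟩

theorem isStrictReduction_restrict (G : OneGame α) {T : Set α} (hT : (G.S ∩ T).Nonempty)
    (hremoved : (G.S \ T).Nonempty)
    (hdom : ∀ s ∈ G.S \ T, ∃ s' ∈ G.S ∩ T, G.pref s' s ∧ ¬ G.pref s s') :
    (G.restrict T hT).IsStrictReduction G :=
  ⟨Set.inter_subset_left, by rwa [restrict, Set.sdiff_self_inter], fun _ _ => Iff.rfl,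
    fun s hs => hdom s (by rwa [restrict, Set.sdiff_self_inter] at hs)⟩

theorem exists_isStrictReduction_not_mem {G : OneGame α} {s t : α} (hs : s ∈ G.S)
    (ht : t ∈ G.S) (hst : ¬ G.pref s t) :
    ∃ G' : OneGame α, G'.IsStrictReduction G ∧ s ∉ G'.S := by
  have hts : G.pref t s := (G.complete s hs t ht).resolve_left hst
  have hne : t ≠ s := by rintro rfl; exact hst hts
  refine ⟨G.restrict {s}ᶜ ⟨t, ht, hne⟩, G.isStrictReduction_restrict _ ⟨s, hs, fun h => h rfl⟩ ?_,
    fun h => h.2 rfl⟩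
  rintro s' ⟨-, hs'⟩
  obtain rfl : s' = s := by simpa using hs'
  exact ⟨t, ⟨ht, hne⟩, hts, hst⟩

namespace IsStrictReduction

variable {G G' : OneGame α}

theorem mem_of_mem_maxSet (hred : G'.IsStrictReduction G) {s : α} (hs : s ∈ G.maxSet) :
    s ∈ G'.S := by
  by_contra hs'
  obtain ⟨t, htS', _, hst⟩ := hred.2.2.2 s ⟨hs.1, hs'⟩
  exact hst (hs.2 t (hred.1 htS'))

theorem maxSet_eq (hred : G'.IsStrictReduction G) : G'.maxSet = G.maxSet := by
  obtain ⟨hsub, -, hpref, hdom⟩ := id hred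
  ext s
  constructor
  · rintro ⟨hsS', hmax'⟩
    refine ⟨hsub hsS', fun t ht => ?_⟩
    by_cases htS' : t ∈ G'.S
    · exact ((hpref s t).1 (hmax' t htS')).1
    · obtain ⟨t', ht'S', ht't, -⟩ := hdom t ⟨ht, htS'⟩
      exact G.trans s (hsub hsS') t' (hsub ht'S') t ht ((hpref s t').1 (hmax' t' ht'S')).1 ht't
  · intro hs
    have hsS' := hred.mem_of_mem_maxSet hs
    exact ⟨hsS', fun t ht => (hpref s t).2 ⟨hs.2 t (hsub ht), hsS', ht⟩⟩

end IsStrictReduction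

end OneGame

/-- A selected strategy that is not maximal could be deleted by a strict reduction, which by ISDS
leaves `φ` unchanged although `φ` of the reduced game no longer contains it. -/
theorem subset_maxSet_of_satISDS1 {Γ : Set (OneGame α)} {φ : OneGame α → Set α}
    (hsol : ∀ G ∈ Γ, φ G ⊆ G.S) (hclosed : StrictlyClosed1 Γ) (hisds : SatISDS1 Γ φ)
    {G : OneGame α} (hG : G ∈ Γ) : φ G ⊆ G.maxSet := by
  intro s hs
  have hsS := hsol G hG hs
  by_contra hmax
  obtain ⟨t, htS, hst⟩ : ∃ t ∈ G.S, ¬ G.pref s t := by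
    by_contra! h
    exact hmax ⟨hsS, h⟩
  obtain ⟨G', hred, hsG'⟩ := OneGame.exists_isStrictReduction_not_mem hsS htS hst
  have hG' := hclosed G hG G' hred
  exact hsG' (hsol G' hG' (hisds G hG G' hG' hred ▸ hs))

/-- on a strictly closed class of one-player games, a solution
concept satisfies ISDS and JO iff it selects exactly the preference-maximal
strategies of every game. -/
theorem oneplayer_characterization (Γ : Set (OneGame α)) (φ : OneGame α → Set α)
    (hsol : ∀ G ∈ Γ, φ G ⊆ G.S) (hclosed : StrictlyClosed1 Γ) :
    (SatISDS1 Γ φ ∧ SatJO1 Γ φ) ↔ ∀ G ∈ Γ, φ G = G.maxSet := by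
  constructor
  · rintro ⟨hisds, hjo⟩ G hG
    exact (subset_maxSet_of_satISDS1 hsol hclosed hisds hG).antisymm (hjo G hG)
  · intro h
    refine ⟨fun G hG G' hG' hred => ?_, fun G hG s hs => (h G hG).symm ▸ hs⟩
    rw [h G hG, h G' hG', hred.maxSet_eq]
end
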